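/- Let U ⊆ ℝⁿ be open with a metric g and an affine connection D given by Christoffel symbols Γ, and let N be the Nijenhuis tensor of the almost complex structure J^D on TU = U × ℝⁿ. Then for all constant v, w ∈ ℝⁿ, evaluating N on the horizontal lift vector fields v^H, w^H at a point (x,ξ) ∈ TU gives N(v^H, w^H)(x,ξ) = (T^D(x)(v,w))^H + (R^D(x)(v,w)(ξ))^V, where the lifts on the right are taken at (x,ξ). -/

import Mathlib

/-!
STATEMENT 6: value of the Nijenhuis tensor of J^D on horizontal lift vector
fields: N(v^H, w^H)(x,ξ) = (T^D(x)(v,w))^H + (R^D(x)(v,w)(ξ))^V.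
-/

/-- Torsion of the connection with Christoffel symbols `Γ`. -/
noncomputable def torsion {n : ℕ}
    (Γ : (Fin n → ℝ) → (Fin n → ℝ) →L[ℝ] (Fin n → ℝ) →L[ℝ] (Fin n → ℝ))
    (x v w : Fin n → ℝ) : Fin n → ℝ :=
  Γ x v w - Γ x w v

/-- Curvature of the connection with Christoffel symbols `Γ`. -/
noncomputable def curv {n : ℕ}
    (Γ : (Fin n → ℝ) → (Fin n → ℝ) →L[ℝ] (Fin n → ℝ) →L[ℝ] (Fin n → ℝ))
    (x v w z : Fin n → ℝ) : Fin n → ℝ :=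
  fderiv ℝ Γ x v w z - fderiv ℝ Γ x w v z + Γ x v (Γ x w z) - Γ x w (Γ x v z)

/-- Horizontal lift of `v` at `(x,ξ)`: `v^H = (v, −Γ(x)(v)(ξ))`. -/
noncomputable def hor {n : ℕ}
    (Γ : (Fin n → ℝ) → (Fin n → ℝ) →L[ℝ] (Fin n → ℝ) →L[ℝ] (Fin n → ℝ))
    (x ξ v : Fin n → ℝ) : (Fin n → ℝ) × (Fin n → ℝ) :=
  (v, -(Γ x v ξ))

/-- Vertical lift of `v`: `v^V = (0, v)`. -/
def ver {n : ℕ} (v : Fin n → ℝ) : (Fin n → ℝ) × (Fin n → ℝ) :=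
  (0, v)

/-- The almost complex structure `J^D` (with `J^D(v^H) = v^V`, `J^D(v^V) = −v^H`). -/
noncomputable def Jstr {n : ℕ}
    (Γ : (Fin n → ℝ) → (Fin n → ℝ) →L[ℝ] (Fin n → ℝ) →L[ℝ] (Fin n → ℝ))
    (x ξ : Fin n → ℝ) (A : (Fin n → ℝ) × (Fin n → ℝ)) :
    (Fin n → ℝ) × (Fin n → ℝ) :=
  (-(A.2 + Γ x A.1 ξ), A.1 + Γ x (A.2 + Γ x A.1 ξ) ξ)

/-- The bracket of vector fields on an open subset of ℝ²ⁿ: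
`[A,B](a) = (fderiv ℝ B a)(A a) − (fderiv ℝ A a)(B a)`. -/
noncomputable def bracket {n : ℕ}
    (A B : (Fin n → ℝ) × (Fin n → ℝ) → (Fin n → ℝ) × (Fin n → ℝ))
    (a : (Fin n → ℝ) × (Fin n → ℝ)) : (Fin n → ℝ) × (Fin n → ℝ) :=
  fderiv ℝ B a (A a) - fderiv ℝ A a (B a)

/-- The Nijenhuis tensor of `J^D`:
`N(A,B) = [JA, JB] − J[JA, B] − J[A, JB] − [A,B]`. -/
noncomputable def nijenhuis {n : ℕ}
    (Γ : (Fin n → ℝ) → (Fin n → ℝ) →L[ℝ] (Fin n → ℝ) →L[ℝ] (Fin n → ℝ))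
    (A B : (Fin n → ℝ) × (Fin n → ℝ) → (Fin n → ℝ) × (Fin n → ℝ))
    (a : (Fin n → ℝ) × (Fin n → ℝ)) : (Fin n → ℝ) × (Fin n → ℝ) :=
  bracket (fun p => Jstr Γ p.1 p.2 (A p)) (fun p => Jstr Γ p.1 p.2 (B p)) a
    - Jstr Γ a.1 a.2 (bracket (fun p => Jstr Γ p.1 p.2 (A p)) B a)
    - Jstr Γ a.1 a.2 (bracket A (fun p => Jstr Γ p.1 p.2 (B p)) a)
    - bracket A B a

theorem statement6 (n : ℕ) (hn : 1 ≤ n) (U : Set (Fin n → ℝ)) (hU : IsOpen U)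
    (g : (Fin n → ℝ) → (Fin n → ℝ) →L[ℝ] (Fin n → ℝ) →L[ℝ] ℝ)
    (hg : ContDiffOn ℝ (⊤ : ℕ∞) g U)
    (hgsymm : ∀ x ∈ U, ∀ v w : Fin n → ℝ, g x v w = g x w v)
    (hgpos : ∀ x ∈ U, ∀ v : Fin n → ℝ, v ≠ 0 → 0 < g x v v)
    (Γ : (Fin n → ℝ) → (Fin n → ℝ) →L[ℝ] (Fin n → ℝ) →L[ℝ] (Fin n → ℝ))
    (hΓ : ContDiffOn ℝ (⊤ : ℕ∞) Γ U) :
    ∀ x ∈ U, ∀ ξ v w : Fin n → ℝ,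
      nijenhuis Γ (fun p => hor Γ p.1 p.2 v) (fun p => hor Γ p.1 p.2 w) (x, ξ)
        = hor Γ x ξ (torsion Γ x v w) + ver (curv Γ x v w ξ) := by

  intro x hx ξ v w
  have hJ : ∀ u : Fin n → ℝ,
      (fun p : (Fin n → ℝ) × (Fin n → ℝ) => Jstr Γ p.1 p.2 (hor Γ p.1 p.2 u))
        = fun _ => ver u := by
    intro u; funext p; simp [Jstr, hor, ver]
  have hdx : HasFDerivAt Γ (fderiv ℝ Γ x) x :=
    ((hΓ.differentiableOn (by simp) x hx).differentiableAt (hU.mem_nhds hx)).hasFDerivAt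
  set F := fderiv ℝ Γ x with hF
  have hΓ1 : HasFDerivAt (fun p : (Fin n → ℝ) × (Fin n → ℝ) => Γ p.1)
      (F.comp (ContinuousLinearMap.fst ℝ _ _)) ((x, ξ) : (Fin n → ℝ) × (Fin n → ℝ)) :=
    by
      have h2 : HasFDerivAt (Prod.fst : (Fin n → ℝ) × (Fin n → ℝ) → _) (ContinuousLinearMap.fst ℝ (Fin n → ℝ) (Fin n → ℝ)) (x, ξ) := hasFDerivAt_fst
      exact HasFDerivAt.comp (G := (Fin n → ℝ) →L[ℝ] (Fin n → ℝ) →L[ℝ] (Fin n → ℝ)) (x, ξ) hdx h2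
  have key := fun u : Fin n → ℝ =>
    ((hΓ1.clm_apply (hasFDerivAt_const u _)).clm_apply hasFDerivAt_snd)
  have hA := (HasFDerivAt.prodMk (hasFDerivAt_const v ((x, ξ) : (Fin n → ℝ) × (Fin n → ℝ))) (key v).neg)
  have hB := (HasFDerivAt.prodMk (hasFDerivAt_const w ((x, ξ) : (Fin n → ℝ) × (Fin n → ℝ))) (key w).neg)
  have hA' : HasFDerivAt (fun p : (Fin n → ℝ) × (Fin n → ℝ) => hor Γ p.1 p.2 v) _ (x, ξ) := hA
  have hB' : HasFDerivAt (fun p : (Fin n → ℝ) × (Fin n → ℝ) => hor Γ p.1 p.2 w) _ (x, ξ) := hB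
  simp only [nijenhuis, bracket, hJ, fderiv_const, hA'.fderiv, hB'.fderiv]
  simp only [Jstr, hor, ver, torsion, curv, ContinuousLinearMap.prod_apply,
    ContinuousLinearMap.comp_apply, ContinuousLinearMap.flip_apply,
    ContinuousLinearMap.add_apply, ContinuousLinearMap.neg_apply,
    ContinuousLinearMap.zero_apply, ContinuousLinearMap.coe_fst',
    ContinuousLinearMap.coe_snd', ContinuousLinearMap.zero_comp,
    map_sub, map_add, map_neg, map_zero, ← hF, Prod.mk.injEq,
    neg_add_cancel, add_neg_cancel, neg_zero, zero_add, add_zero, sub_zero,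
    zero_sub, Prod.fst_sub, Prod.snd_sub, Prod.fst_neg, Prod.snd_neg]
  rw [Prod.ext_iff]
  constructor <;> (simp; try abel)
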